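/- arXiv:2603.29604 — 2 statements merged into one kernel-verified Lean document; each statement's English description precedes it below -/
import Mathlib

section
/- For g > 0, λ > 0, T ∈ ℝ^{2×3}, N ∈ ℝ^{1×3} with (T;N) orthogonal, the proximal mapping of the function q(u) = g‖T u‖ + δ_S(u), where S = ker N, satisfies: prox_{λq}(u) = 0 if ‖T u‖ ≤ λg, and prox_{λq}(u) = (1 - λg/‖T u‖)·Tᵀ T u otherwise. -/
/-!
Since `(T; N)` is orthogonal, `T` maps `S = ker N` bijectively onto `ℝ²` with inverse `Tᵀ`, and
`‖z - u‖² = ‖Tz - Tu‖² + ‖Nu‖²` for `z ∈ S`. The problem therefore becomes the proximal problem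
for `c‖·‖` on `ℝ²` at `a = Tu` with `c = λg`, solved by soft thresholding `w₀`: it satisfies
`a = w₀ + s` for a subgradient `s` of `c‖·‖` at `w₀` (`‖s‖ ≤ c`, `⟨s, w₀⟩ = c‖w₀‖`), and
Cauchy–Schwarz turns this into `φ(w₀) + ½‖w - w₀‖² ≤ φ(w)` for `φ(w) = ½‖w - a‖² + c‖w‖`,
giving minimality and uniqueness.
-/

open Matrix

section OrthogonalRows

variable {m k n R : Type*} [Fintype m] [Fintype k] [DecidableEq n] [CommRing R]
  {T : Matrix m n R} {N : Matrix k n R}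

lemma transpose_mul_add_transpose_mul_eq_one_of_fromRows
    (hQ : (fromRows T N)ᵀ * fromRows T N = 1) : Tᵀ * T + Nᵀ * N = 1 := by
  rwa [transpose_fromRows, fromCols_mul_fromRows] at hQ

variable [Fintype n] [DecidableEq m] [DecidableEq k]

lemma fromBlocks_eq_one_of_fromRows (e : n ≃ m ⊕ k)
    (hQ : (fromRows T N)ᵀ * fromRows T N = 1) :
    fromBlocks (T * Tᵀ) (T * Nᵀ) (N * Tᵀ) (N * Nᵀ) = 1 := by
  rwa [transpose_fromRows, fromCols_mul_fromRows_eq_one_comm e, fromRows_mul_fromCols] at hQ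

lemma mul_transpose_eq_one_of_fromRows (e : n ≃ m ⊕ k)
    (hQ : (fromRows T N)ᵀ * fromRows T N = 1) : T * Tᵀ = 1 := by
  simpa only [toBlocks_fromBlocks₁₁] using congrArg toBlocks₁₁
    ((fromBlocks_eq_one_of_fromRows e hQ).trans fromBlocks_one.symm)

lemma mul_transpose_eq_zero_of_fromRows (e : n ≃ m ⊕ k)
    (hQ : (fromRows T N)ᵀ * fromRows T N = 1) : N * Tᵀ = 0 := by
  simpa only [toBlocks_fromBlocks₂₁] using congrArg toBlocks₂₁
    ((fromBlocks_eq_one_of_fromRows e hQ).trans fromBlocks_one.symm)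

end OrthogonalRows

section KernelDecomposition

variable {m k n R : Type*} [Fintype m] [Fintype k] [Fintype n] [DecidableEq n] [CommRing R]
  {T : Matrix m n R} {N : Matrix k n R}

lemma dotProduct_self_eq_add_of_transpose_mul_add (h : Tᵀ * T + Nᵀ * N = 1) (v : n → R) :
    v ⬝ᵥ v = T *ᵥ v ⬝ᵥ T *ᵥ v + N *ᵥ v ⬝ᵥ N *ᵥ v := by
  have hv : v ⬝ᵥ v = v ⬝ᵥ (Tᵀ * T + Nᵀ * N) *ᵥ v := by rw [h, one_mulVec]
  rw [hv, add_mulVec, dotProduct_add, ← mulVec_mulVec, ← mulVec_mulVec,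
    dotProduct_transpose_mulVec, dotProduct_transpose_mulVec]

lemma transpose_mulVec_mulVec_of_mulVec_eq_zero (h : Tᵀ * T + Nᵀ * N = 1) {z : n → R}
    (hz : N *ᵥ z = 0) : Tᵀ *ᵥ (T *ᵥ z) = z := by
  conv_rhs => rw [← one_mulVec z, ← h]
  rw [add_mulVec, ← mulVec_mulVec, ← mulVec_mulVec, hz, mulVec_zero, add_zero]

lemma sub_dotProduct_sub_of_mulVec_eq_zero (h : Tᵀ * T + Nᵀ * N = 1) {z : n → R}
    (hz : N *ᵥ z = 0) (u : n → R) :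
    (z - u) ⬝ᵥ (z - u) = (T *ᵥ z - T *ᵥ u) ⬝ᵥ (T *ᵥ z - T *ᵥ u) + N *ᵥ u ⬝ᵥ N *ᵥ u := by
  rw [dotProduct_self_eq_add_of_transpose_mul_add h, mulVec_sub, mulVec_sub, hz, zero_sub,
    neg_dotProduct, dotProduct_neg, neg_neg]

end KernelDecomposition

section SoftThreshold

variable {ι : Type*} [Fintype ι]

lemma dotProduct_self_nonneg (v : ι → ℝ) : 0 ≤ v ⬝ᵥ v := by
  simpa using dotProduct_self_star_nonneg v

lemma dotProduct_le_sqrt_mul_sqrt (s w : ι → ℝ) : s ⬝ᵥ w ≤ √(s ⬝ᵥ s) * √(w ⬝ᵥ w) := by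
  simpa [dotProduct, sq] using Real.sum_mul_le_sqrt_mul_sqrt Finset.univ s w

lemma sqrt_smul_dotProduct_smul (t : ℝ) (a : ι → ℝ) :
    √((t • a) ⬝ᵥ (t • a)) = |t| * √(a ⬝ᵥ a) := by
  rw [smul_dotProduct, dotProduct_smul, smul_eq_mul, smul_eq_mul, ← mul_assoc, ← sq,
    Real.sqrt_mul (sq_nonneg t), Real.sqrt_sq_eq_abs]

lemma prox_norm_add_le_of_subgradient {c : ℝ} {a s w₀ : ι → ℝ} (hs : √(s ⬝ᵥ s) ≤ c)
    (hsw₀ : s ⬝ᵥ w₀ = c * √(w₀ ⬝ᵥ w₀)) (ha : a = w₀ + s) (w : ι → ℝ) :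
    (1/2) * ((w₀ - a) ⬝ᵥ (w₀ - a)) + c * √(w₀ ⬝ᵥ w₀) + (1/2) * ((w - w₀) ⬝ᵥ (w - w₀))
      ≤ (1/2) * ((w - a) ⬝ᵥ (w - a)) + c * √(w ⬝ᵥ w) := by
  have hsw : s ⬝ᵥ w ≤ c * √(w ⬝ᵥ w) :=
    (dotProduct_le_sqrt_mul_sqrt s w).trans (mul_le_mul_of_nonneg_right hs (Real.sqrt_nonneg _))
  have h₀ : w₀ - a = -s := by rw [ha]; abel
  have h₁ : w - a = (w - w₀) - s := by rw [ha]; abel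
  have hexp (d : ι → ℝ) : (d - s) ⬝ᵥ (d - s) = d ⬝ᵥ d - 2 * (s ⬝ᵥ d) + s ⬝ᵥ s := by
    rw [sub_dotProduct, dotProduct_sub, dotProduct_sub, dotProduct_comm d s]
    ring
  rw [h₀, neg_dotProduct, dotProduct_neg, neg_neg, h₁, hexp, dotProduct_sub s w w₀]
  linarith

noncomputable def softThreshold (c : ℝ) (a : ι → ℝ) : ι → ℝ :=
  if √(a ⬝ᵥ a) ≤ c then 0 else (1 - c / √(a ⬝ᵥ a)) • a

lemma exists_subgradient_softThreshold {c : ℝ} (hc : 0 ≤ c) (a : ι → ℝ) :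
    ∃ s : ι → ℝ, √(s ⬝ᵥ s) ≤ c ∧
      s ⬝ᵥ softThreshold c a = c * √(softThreshold c a ⬝ᵥ softThreshold c a) ∧
      a = softThreshold c a + s := by
  by_cases h : √(a ⬝ᵥ a) ≤ c
  · exact ⟨a, h, by simp [softThreshold, h]⟩
  set r := √(a ⬝ᵥ a) with hr_def
  have hcr : c < r := not_le.mp h
  have hr : 0 < r := hc.trans_lt hcr
  have haa : a ⬝ᵥ a = r ^ 2 := (Real.sq_sqrt (dotProduct_self_nonneg a)).symm
  set t := c / r
  have ht : 0 ≤ t := div_nonneg hc hr.le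
  have ht1 : t < 1 := (div_lt_one hr).mpr hcr
  have htr : t * r = c := div_mul_cancel₀ c hr.ne'
  have hsoft : softThreshold c a = (1 - t) • a := if_neg h
  refine ⟨t • a, ?_, ?_, ?_⟩
  · rw [sqrt_smul_dotProduct_smul, ← hr_def, abs_of_nonneg ht, htr]
  · rw [hsoft, sqrt_smul_dotProduct_smul, ← hr_def, abs_of_pos (sub_pos.mpr ht1),
      smul_dotProduct, dotProduct_smul, haa, smul_eq_mul, smul_eq_mul, ← htr]
    ring
  · rw [hsoft, ← add_smul, sub_add_cancel, one_smul]

lemma softThreshold_add_le {c : ℝ} (hc : 0 ≤ c) (a w : ι → ℝ) :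
    (1/2) * ((softThreshold c a - a) ⬝ᵥ (softThreshold c a - a))
        + c * √(softThreshold c a ⬝ᵥ softThreshold c a)
        + (1/2) * ((w - softThreshold c a) ⬝ᵥ (w - softThreshold c a))
      ≤ (1/2) * ((w - a) ⬝ᵥ (w - a)) + c * √(w ⬝ᵥ w) := by
  obtain ⟨s, hs, hsw₀, ha⟩ := exists_subgradient_softThreshold hc a
  exact prox_norm_add_le_of_subgradient hs hsw₀ ha w

end SoftThreshold

/-- Proximal mapping of `q(u) = g‖Tu‖ + δ_{ker N}(u)` on `ℝ³`, `(T;N)` orthogonal: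
`prox_{λq}(u) = 0` if `‖Tu‖ ≤ λg`, and `(1 - λg/‖Tu‖) Tᵀ T u` otherwise; i.e. this
point lies in `S = ker N` and is the unique minimizer over `S` of
`z ↦ (1/2)‖z-u‖² + λ g‖Tz‖`. -/
theorem stmt3 (g lam : ℝ) (hg : 0 < g) (hlam : 0 < lam)
    (T : Matrix (Fin 2) (Fin 3) ℝ) (N : Matrix (Fin 1) (Fin 3) ℝ)
    (hQ : (Matrix.fromRows T N)ᵀ * (Matrix.fromRows T N) = 1)
    (u p : Fin 3 → ℝ)
    (hp : p = if Real.sqrt (T.mulVec u ⬝ᵥ T.mulVec u) ≤ lam * g then 0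
      else (1 - lam * g / Real.sqrt (T.mulVec u ⬝ᵥ T.mulVec u)) • (Tᵀ * T).mulVec u) :
    N.mulVec p = 0 ∧
    (∀ z : Fin 3 → ℝ, N.mulVec z = 0 →
      (1/2) * ((p - u) ⬝ᵥ (p - u)) + lam * (g * Real.sqrt (T.mulVec p ⬝ᵥ T.mulVec p))
        ≤ (1/2) * ((z - u) ⬝ᵥ (z - u)) + lam * (g * Real.sqrt (T.mulVec z ⬝ᵥ T.mulVec z))) ∧
    (∀ z : Fin 3 → ℝ, N.mulVec z = 0 →
      (1/2) * ((z - u) ⬝ᵥ (z - u)) + lam * (g * Real.sqrt (T.mulVec z ⬝ᵥ T.mulVec z))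
        ≤ (1/2) * ((p - u) ⬝ᵥ (p - u)) + lam * (g * Real.sqrt (T.mulVec p ⬝ᵥ T.mulVec p))
      → z = p) := by
  have hc : 0 ≤ lam * g := (mul_pos hlam hg).le
  have hsum := transpose_mul_add_transpose_mul_eq_one_of_fromRows hQ
  have hTT := mul_transpose_eq_one_of_fromRows finSumFinEquiv.symm hQ
  have hNT := mul_transpose_eq_zero_of_fromRows finSumFinEquiv.symm hQ
  have hp' : p = Tᵀ *ᵥ softThreshold (lam * g) (T *ᵥ u) := by
    rw [hp, softThreshold]
    split_ifs <;> simp only [mulVec_zero, mulVec_smul, mulVec_mulVec]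
  have hNp : N *ᵥ p = 0 := by rw [hp', mulVec_mulVec, hNT, zero_mulVec]
  have hTp : T *ᵥ p = softThreshold (lam * g) (T *ᵥ u) := by
    rw [hp', mulVec_mulVec, hTT, one_mulVec]
  have key (z : Fin 3 → ℝ) (hz : N *ᵥ z = 0) :
      (1/2) * ((p - u) ⬝ᵥ (p - u)) + lam * (g * √(T *ᵥ p ⬝ᵥ T *ᵥ p))
          + (1/2) * ((T *ᵥ z - T *ᵥ p) ⬝ᵥ (T *ᵥ z - T *ᵥ p))
        ≤ (1/2) * ((z - u) ⬝ᵥ (z - u)) + lam * (g * √(T *ᵥ z ⬝ᵥ T *ᵥ z)) := by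
    have := softThreshold_add_le hc (T *ᵥ u) (T *ᵥ z)
    rw [sub_dotProduct_sub_of_mulVec_eq_zero hsum hz,
      sub_dotProduct_sub_of_mulVec_eq_zero hsum hNp, hTp]
    linarith
  refine ⟨hNp, fun z hz => ?_, fun z hz hle => ?_⟩
  · linarith [key z hz, dotProduct_self_nonneg (T *ᵥ z - T *ᵥ p)]
  · have hTz : T *ᵥ z = T *ᵥ p := by
      rw [← sub_eq_zero, ← dotProduct_self_eq_zero]
      linarith [key z hz, dotProduct_self_nonneg (T *ᵥ z - T *ᵥ p)]
    rw [← transpose_mulVec_mulVec_of_mulVec_eq_zero hsum hz, hTz,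
      transpose_mulVec_mulVec_of_mulVec_eq_zero hsum hNp]
end

section
/- Let A ∈ ℝ^{m×m} be partitioned into blocks A = [[A_{NN}, A_{IN}ᵀ],[A_{IN}, A_{II}]] and be symmetric positive definite, and let P_N, W_N be symmetric matrices of the size of A_{NN} with P_N² = P_N, W_N(I - P_N) = I - P_N, and W_N positive semidefinite. Then the matrix = [[P_N A_{NN} P_N + W_N, P_N A_{IN}ᵀ],[A_{IN} P_N, A_{II}]] is positive definite, i.e., zᵀÂz > 0 for all z ≠ 0. -/
open Matrix

/-- If `A = [[A_NN, A_INᵀ],[A_IN, A_II]]` is symmetric positive definite and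
`P_N, W_N` are symmetric with `P_N² = P_N`, `W_N(I-P_N) = I-P_N`, `W_N ⪰ 0`,
then `Â = [[P_N A_NN P_N + W_N, P_N A_INᵀ],[A_IN P_N, A_II]]` satisfies
`zᵀ Â z > 0` for all `z ≠ 0`. -/
theorem stmt16 (a b : ℕ)
    (ANN : Matrix (Fin a) (Fin a) ℝ) (AIN : Matrix (Fin b) (Fin a) ℝ)
    (AII : Matrix (Fin b) (Fin b) ℝ)
    (hA : (Matrix.fromBlocks ANN AINᵀ AIN AII).PosDef)
    (PN WN : Matrix (Fin a) (Fin a) ℝ)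
    (hPs : PNᵀ = PN) (hWs : WNᵀ = WN) (hP2 : PN * PN = PN)
    (hWP : WN * (1 - PN) = 1 - PN) (hW : WN.PosSemidef) :
    ∀ z : (Fin a ⊕ Fin b) → ℝ, z ≠ 0 →
      0 < z ⬝ᵥ (Matrix.fromBlocks (PN * ANN * PN + WN) (PN * AINᵀ)
        (AIN * PN) AII).mulVec z := by
  intro z hz
  set zN : Fin a → ℝ := z ∘ Sum.inl with hzN
  set zI : Fin b → ℝ := z ∘ Sum.inr with hzI
  have hzsplit : z = Sum.elim zN zI := by
    funext i; cases i <;> rfl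
  set w : (Fin a ⊕ Fin b) → ℝ := Sum.elim (PN *ᵥ zN) zI with hw
  -- key algebraic identity
  have key : z ⬝ᵥ (Matrix.fromBlocks (PN * ANN * PN + WN) (PN * AINᵀ)
        (AIN * PN) AII).mulVec z
      = w ⬝ᵥ (Matrix.fromBlocks ANN AINᵀ AIN AII).mulVec w + zN ⬝ᵥ WN *ᵥ zN := by
    rw [hzsplit, hw]
    simp only [fromBlocks_mulVec, sumElim_dotProduct_sumElim, add_mulVec,
      Matrix.mul_assoc, mulVec_mulVec, ← Matrix.mulVec_mulVec, Sum.elim_comp_inl, Sum.elim_comp_inr]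
    have hsym : ∀ (v : Fin a → ℝ) (u : Fin a → ℝ), v ⬝ᵥ PN *ᵥ u = (PN *ᵥ v) ⬝ᵥ u := by
      intro v u
      conv_lhs => rw [← hPs]
      rw [dotProduct_mulVec, vecMul_transpose]
    simp only [dotProduct_add, hsym]
    ring
  rw [key]
  have hWq : 0 ≤ zN ⬝ᵥ WN *ᵥ zN := hW.dotProduct_mulVec_nonneg zN
  rcases eq_or_ne w 0 with hw0 | hw0
  · -- then PN zN = 0 and zI = 0
    have hPz : PN *ᵥ zN = 0 := by
      funext i; exact congrFun hw0 (Sum.inl i)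
    have hzI0 : zI = 0 := by
      funext i; exact congrFun hw0 (Sum.inr i)
    have hzN0 : zN ≠ 0 := by
      intro h
      apply hz
      funext i; cases i with
      | inl i => exact congrFun h i
      | inr i => exact congrFun hzI0 i
    -- quadratic form with WN is positive: otherwise WN zN = 0, then zN = 0
    have : 0 < zN ⬝ᵥ WN *ᵥ zN := by
      rcases lt_or_eq_of_le hWq with h | h
      · exact h
      · exfalso
        have hWz : WN *ᵥ zN = 0 := by
          have := (hW.dotProduct_mulVec_zero_iff zN).mp (by simpa using h.symm)
          simpa using this
        apply hzN0
        have : (1 - PN) *ᵥ zN = zN - PN *ᵥ zN := by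
          simp [sub_mulVec]
        have h2 : WN *ᵥ ((1 - PN) *ᵥ zN) = (1 - PN) *ᵥ zN := by
          rw [mulVec_mulVec, hWP]
        rw [this] at h2
        rw [hPz, sub_zero] at h2
        rw [hWz] at h2
        exact h2.symm
    rw [hw0]
    simpa using this
  · have := hA.dotProduct_mulVec_pos hw0
    have h' : 0 < w ⬝ᵥ (Matrix.fromBlocks ANN AINᵀ AIN AII).mulVec w := by
      simpa using this
    linarith
end
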